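/- δ_FT is strictly decreasing on the interval [0.6375559772, 0.6457072160], δ_FT(0.6375559772) > π/√12, and there exists q ∈ (0.6457072159, 0.6457072160) with δ_FT(q) = π/√12. (Thus q₂ = 0.6457072159… is the largest radius ratio for which Fejes Tóth's perturbed packing has density at least that of the hexagonal packing.) -/

import Mathlib

/-!
With `s = √(2q + 1)` and `t = √(q(q + 2))` one has `√(2q³ + 5q² + 2q) = s t`, and the density
simplifies to `π / deltaFT q = √(ftU q) + √(ftV q)` for two explicit rational functions.
Clearing denominators in their logarithmic derivatives leaves the polynomials
`4 + 9q - 6q³ - 14q⁴ - 5q⁵` and `3 + 12q + 4q² - 6q³ - 19q⁴ - 12q⁵ - 2q⁶`, both positive on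
`(0, 3/4)`, so `deltaFT` decreases there. Comparing `deltaFT q` with `π / √12` amounts to comparing
`√a + √b` with `√12`, which squaring twice turns into inequalities between rationals, checked at
`0.6457072159` and `0.6457072160`. The intermediate value theorem gives the crossing point, and
monotonicity gives the inequality at `0.6375559772`.
-/

open Real

/-- The density of Fejes Tóth's perturbation of Kennedy's triangulated two-disc packing,
as a function of the radius ratio `q`. -/
noncomputable def deltaFT (q : ℝ) : ℝ :=
  π * (q ^ 2 + 1) * (q + 1) ^ 4 * Real.sqrt (1 + 2 * q) /
    (4 * q * (2 * q ^ 2 + 5 * q + Real.sqrt (2 * q ^ 3 + 5 * q ^ 2 + 2 * q) + 2) *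
      (q + Real.sqrt (2 * q ^ 3 + 5 * q ^ 2 + 2 * q)))

open Set

theorem strictMonoOn_div_of_hasDerivAt {f g f' g' : ℝ → ℝ} {D : Set ℝ} (hD : Convex ℝ D)
    (hf : ∀ x, HasDerivAt f (f' x) x) (hg : ∀ x, HasDerivAt g (g' x) x)
    (hg_pos : ∀ x ∈ D, 0 < g x) (hpos : ∀ x ∈ interior D, 0 < f' x * g x - f x * g' x) :
    StrictMonoOn (fun x => f x / g x) D := by
  refine strictMonoOn_of_deriv_pos hD (fun x hx => ?_) (fun x hx => ?_)
  · exact ((hf x).continuousAt.div (hg x).continuousAt (hg_pos x hx).ne').continuousWithinAt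
  · have hgx := hg_pos x (interior_subset hx)
    rw [show (fun x => f x / g x) = f / g from rfl, ((hf x).div (hg x) hgx.ne').deriv]
    exact div_pos (hpos x hx) (pow_pos hgx 2)

theorem sqrt_add_sqrt_lt_sqrt {a b c : ℝ} (ha : 0 ≤ a) (hb : 0 ≤ b) (habc : a + b ≤ c)
    (h : 4 * a * b < (c - a - b) ^ 2) : √a + √b < √c := by
  have hcross : 2 * (√a * √b) < c - a - b := by
    refine lt_of_pow_lt_pow_left₀ 2 (by linarith) ?_
    rwa [mul_pow, mul_pow, sq_sqrt ha, sq_sqrt hb, ← mul_assoc, show (2 : ℝ) ^ 2 = 4 by norm_num]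
  rw [lt_sqrt (by positivity), add_sq, sq_sqrt ha, sq_sqrt hb]
  linarith

theorem sqrt_lt_sqrt_add_sqrt {a b c : ℝ} (ha : 0 ≤ a) (hb : 0 ≤ b)
    (h : (c - a - b) ^ 2 < 4 * a * b) : √c < √a + √b := by
  have hcross : |c - a - b| < 2 * (√a * √b) := by
    refine abs_lt_of_sq_lt_sq ?_ (by positivity)
    rwa [mul_pow, mul_pow, sq_sqrt ha, sq_sqrt hb, ← mul_assoc, show (2 : ℝ) ^ 2 = 4 by norm_num]
  have hpos : 0 < √a + √b := by
    have : 0 < √a * √b := by linarith [abs_nonneg (c - a - b)]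
    nlinarith [sqrt_nonneg a, sqrt_nonneg b]
  rw [sqrt_lt' hpos, add_sq, sq_sqrt ha, sq_sqrt hb]
  linarith [le_abs_self (c - a - b)]

noncomputable def ftU (q : ℝ) : ℝ :=
  64 * q ^ 4 * (q + 2) ^ 2 * (2 * q + 1) / ((q ^ 2 + 1) ^ 2 * (q + 1) ^ 8)

noncomputable def ftV (q : ℝ) : ℝ :=
  64 * q ^ 3 * (q + 2) * (q ^ 2 + 3 * q + 1) ^ 2 / ((q ^ 2 + 1) ^ 2 * (q + 1) ^ 8)

theorem ftU_pos {q : ℝ} (hq : 0 < q) : 0 < ftU q := by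
  unfold ftU
  positivity

theorem ftV_pos {q : ℝ} (hq : 0 < q) : 0 < ftV q := by
  unfold ftV
  positivity

theorem hasDerivAt_ft_denominator (x : ℝ) :
    HasDerivAt (fun q => (q ^ 2 + 1) ^ 2 * (q + 1) ^ 8)
      (4 * x * (x ^ 2 + 1) * (x + 1) ^ 8 + 8 * (x ^ 2 + 1) ^ 2 * (x + 1) ^ 7) x := by
  refine ((((hasDerivAt_pow 2 x).add_const 1).fun_pow 2).fun_mul
    (((hasDerivAt_id' x).add_const 1).fun_pow 8)).congr_deriv ?_
  norm_num
  ring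

theorem strictMonoOn_ftU : StrictMonoOn ftU (Icc 0 (3 / 4)) := by
  have hnum : ∀ x : ℝ, HasDerivAt (fun q => 64 * q ^ 4 * (q + 2) ^ 2 * (2 * q + 1))
      (64 * (4 * x ^ 3 * (x + 2) ^ 2 * (2 * x + 1) + 2 * x ^ 4 * (x + 2) * (2 * x + 1)
        + 2 * x ^ 4 * (x + 2) ^ 2)) x := fun x => by
    refine ((((hasDerivAt_pow 4 x).const_mul 64).fun_mul
      (((hasDerivAt_id' x).add_const 2).fun_pow 2)).fun_mul
      (((hasDerivAt_id' x).const_mul 2).add_const 1)).congr_deriv ?_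
    norm_num
    ring
  refine strictMonoOn_div_of_hasDerivAt (convex_Icc _ _) hnum hasDerivAt_ft_denominator
    (fun x hx => by have := hx.1; positivity) fun x hx => ?_
  rw [interior_Icc] at hx
  obtain ⟨hx0, hx1⟩ := hx
  have hQ : 0 < 4 + 9 * x - 6 * x ^ 3 - 14 * x ^ 4 - 5 * x ^ 5 := by
    nlinarith [pow_pos hx0 2, pow_pos hx0 3, pow_pos hx0 4, pow_pos hx0 5]
  calc (0 : ℝ) < 128 * x ^ 3 * (x + 2) * (x ^ 2 + 1) * (x + 1) ^ 7
        * (4 + 9 * x - 6 * x ^ 3 - 14 * x ^ 4 - 5 * x ^ 5) := mul_pos (by positivity) hQ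
    _ = _ := by ring

theorem strictMonoOn_ftV : StrictMonoOn ftV (Icc 0 (3 / 4)) := by
  have hnum : ∀ x : ℝ, HasDerivAt (fun q => 64 * q ^ 3 * (q + 2) * (q ^ 2 + 3 * q + 1) ^ 2)
      (64 * (3 * x ^ 2 * (x + 2) * (x ^ 2 + 3 * x + 1) ^ 2 + x ^ 3 * (x ^ 2 + 3 * x + 1) ^ 2
        + 2 * x ^ 3 * (x + 2) * (x ^ 2 + 3 * x + 1) * (2 * x + 3))) x := fun x => by
    refine ((((hasDerivAt_pow 3 x).const_mul 64).fun_mul ((hasDerivAt_id' x).add_const 2)).fun_mul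
      ((((hasDerivAt_pow 2 x).fun_add ((hasDerivAt_id' x).const_mul 3)).add_const 1).fun_pow 2)
      ).congr_deriv ?_
    norm_num
    ring
  refine strictMonoOn_div_of_hasDerivAt (convex_Icc _ _) hnum hasDerivAt_ft_denominator
    (fun x hx => by have := hx.1; positivity) fun x hx => ?_
  rw [interior_Icc] at hx
  obtain ⟨hx0, hx1⟩ := hx
  have hQ : 0 < 3 + 12 * x + 4 * x ^ 2 - 6 * x ^ 3 - 19 * x ^ 4 - 12 * x ^ 5 - 2 * x ^ 6 := by
    nlinarith [pow_pos hx0 2, pow_pos hx0 3, pow_pos hx0 4, pow_pos hx0 5, pow_pos hx0 6]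
  calc (0 : ℝ) < 128 * x ^ 2 * (x ^ 2 + 3 * x + 1) * (x ^ 2 + 1) * (x + 1) ^ 7
        * (3 + 12 * x + 4 * x ^ 2 - 6 * x ^ 3 - 19 * x ^ 4 - 12 * x ^ 5 - 2 * x ^ 6) :=
          mul_pos (by positivity) hQ
    _ = _ := by ring

theorem deltaFT_eq_pi_div {q : ℝ} (hq : 0 < q) :
    deltaFT q = π / (√(ftU q) + √(ftV q)) := by
  have hs2 : √(2 * q + 1) ^ 2 = 2 * q + 1 := sq_sqrt (by positivity)
  have ht2 : √(q * (q + 2)) ^ 2 = q * (q + 2) := sq_sqrt (by positivity)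
  have hs : 0 < √(2 * q + 1) := sqrt_pos.2 (by positivity)
  have hU : √(ftU q) = 8 * q ^ 2 * (q + 2) / ((q ^ 2 + 1) * (q + 1) ^ 4) * √(2 * q + 1) := by
    rw [← sqrt_sq (by positivity : 0 ≤ 8 * q ^ 2 * (q + 2) / ((q ^ 2 + 1) * (q + 1) ^ 4)),
      ← sqrt_mul (sq_nonneg _), ftU]
    congr 1
    field_simp
    ring
  have hV : √(ftV q) = 8 * q * (q ^ 2 + 3 * q + 1) / ((q ^ 2 + 1) * (q + 1) ^ 4)
      * √(q * (q + 2)) := by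
    rw [← sqrt_sq (by positivity : 0 ≤ 8 * q * (q ^ 2 + 3 * q + 1) / ((q ^ 2 + 1) * (q + 1) ^ 4)),
      ← sqrt_mul (sq_nonneg _), ftV]
    congr 1
    field_simp
    ring
  have hst : √(2 * q ^ 3 + 5 * q ^ 2 + 2 * q) = √(2 * q + 1) * √(q * (q + 2)) := by
    rw [← sqrt_mul (by positivity)]
    ring_nf
  rw [deltaFT, hU, hV, hst, add_comm 1 (2 * q)]
  generalize √(2 * q + 1) = s at hs hs2 ⊢
  have ht := sqrt_nonneg (q * (q + 2))
  generalize √(q * (q + 2)) = t at ht ht2 ⊢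
  rw [div_eq_div_iff (by positivity) (by positivity)]
  field_simp
  linear_combination (16 * q + 8 * q ^ 2 - 4 * t ^ 2) * hs2 - 4 * (2 * q + 1) * ht2

theorem sqrt_ftU_add_sqrt_ftV_pos {q : ℝ} (hq : 0 < q) : 0 < √(ftU q) + √(ftV q) :=
  add_pos_of_pos_of_nonneg (sqrt_pos.2 (ftU_pos hq)) (sqrt_nonneg _)

theorem strictAntiOn_deltaFT : StrictAntiOn deltaFT (Ioc 0 (3 / 4)) := by
  intro x hx y hy hxy
  have hIcc : Ioc (0 : ℝ) (3 / 4) ⊆ Icc 0 (3 / 4) := Ioc_subset_Icc_self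
  have hsum : √(ftU x) + √(ftV x) < √(ftU y) + √(ftV y) :=
    add_lt_add (sqrt_lt_sqrt (ftU_pos hx.1).le (strictMonoOn_ftU (hIcc hx) (hIcc hy) hxy))
      (sqrt_lt_sqrt (ftV_pos hx.1).le (strictMonoOn_ftV (hIcc hx) (hIcc hy) hxy))
  rw [deltaFT_eq_pi_div hx.1, deltaFT_eq_pi_div hy.1]
  exact div_lt_div_of_pos_left pi_pos (sqrt_ftU_add_sqrt_ftV_pos hx.1) hsum

theorem continuousOn_deltaFT : ContinuousOn deltaFT (Ioi 0) := by
  refine ContinuousOn.div (by fun_prop) (by fun_prop) fun x hx => ?_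
  have : 0 < x := hx
  positivity

theorem pi_div_sqrt_twelve_lt_deltaFT {q : ℝ} (hq : 0 < q)
    (h : √(ftU q) + √(ftV q) < √12) : π / √12 < deltaFT q := by
  rw [deltaFT_eq_pi_div hq]
  exact div_lt_div_of_pos_left pi_pos (sqrt_ftU_add_sqrt_ftV_pos hq) h

theorem deltaFT_lt_pi_div_sqrt_twelve {q : ℝ} (hq : 0 < q)
    (h : √12 < √(ftU q) + √(ftV q)) : deltaFT q < π / √12 := by
  rw [deltaFT_eq_pi_div hq]
  exact div_lt_div_of_pos_left pi_pos (by positivity) h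

theorem deltaFT_properties :
    StrictAntiOn deltaFT (Set.Icc (0.6375559772 : ℝ) 0.6457072160) ∧
      deltaFT 0.6375559772 > π / Real.sqrt 12 ∧
      ∃ q ∈ Set.Ioo (0.6457072159 : ℝ) 0.6457072160, deltaFT q = π / Real.sqrt 12 := by
  have hanti : StrictAntiOn deltaFT (Icc (0.6375559772 : ℝ) 0.6457072160) :=
    strictAntiOn_deltaFT.mono (Icc_subset_Ioc (by norm_num) (by norm_num))
  have hlow : π / √12 < deltaFT 0.6457072159 :=
    pi_div_sqrt_twelve_lt_deltaFT (by norm_num) <|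
      sqrt_add_sqrt_lt_sqrt (by norm_num [ftU]) (by norm_num [ftV])
        (by norm_num [ftU, ftV]) (by norm_num [ftU, ftV])
  have hhigh : deltaFT 0.6457072160 < π / √12 :=
    deltaFT_lt_pi_div_sqrt_twelve (by norm_num) <|
      sqrt_lt_sqrt_add_sqrt (by norm_num [ftU]) (by norm_num [ftV]) (by norm_num [ftU, ftV])
  refine ⟨hanti, ?_, ?_⟩
  · exact hlow.trans (hanti ⟨le_rfl, by norm_num⟩ ⟨by norm_num, by norm_num⟩ (by norm_num))
  · exact intermediate_value_Ioo' (by norm_num)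
      (continuousOn_deltaFT.mono fun x hx => lt_of_lt_of_le (by norm_num) hx.1) ⟨hhigh, hlow⟩
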